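/- arXiv:2201.05777 — 3 statements merged into one kernel-verified Lean document; each statement's English description precedes it below -/
import Mathlib

section
/- Let V : ℝ → ℝ be continuous, μ, ℏ > 0, c ∈ ℝ, and g analytic with g(0)=0. Define T₀(u,v) = u/4 + g(v) + c and T_n(u,v) = u/4 + g(v) + c + (μ/2ℏ²)∫₀^v∫₀^u [V((x+y)/2) − V((x−y)/2)] T_{n−1}(x,y) dx dy. Then the sequence (T_n) converges absolutely and uniformly on every bounded rectangle to a continuous function T satisfying the integral equation, i.e., a solution to the time kernel equation with boundary conditions T(u,0) = u/4 + c and T(0,v) = g(v) + c exists. -/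
/-!
The iterates are the Picard iterates of the affine Volterra operator
`T ↦ f + κ ∫₀^v ∫₀^u K T` with continuous kernel `K`. On the square `|u|, |v| ≤ R`, where
`|K| ≤ M`, induction gives `|T_{n+1} - T_n| ≤ C (|κ| M R)^n |v|^n / n!`: each application of the
operator integrates `|y|^n` once more. The telescoping series is thus dominated by an exponential
series, so it converges uniformly on bounded sets to a continuous limit, and passing to the limit
under the integral gives the fixed-point equation. The double integral vanishes when `u = 0` or
`v = 0`, which gives the boundary values.
-/

open Filter Topology intervalIntegral Function Metric
open scoped Nat Interval

noncomputable def rectIntegral (K S : ℝ → ℝ → ℝ) (u v : ℝ) : ℝ :=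
  ∫ y in (0:ℝ)..v, ∫ x in (0:ℝ)..u, K x y * S x y

section rectIntegral

variable {K S S' : ℝ → ℝ → ℝ}

@[simp]
lemma rectIntegral_zero_left (K S : ℝ → ℝ → ℝ) (v : ℝ) : rectIntegral K S 0 v = 0 := by
  simp [rectIntegral]

@[simp]
lemma rectIntegral_zero_right (K S : ℝ → ℝ → ℝ) (u : ℝ) : rectIntegral K S u 0 = 0 := by
  simp [rectIntegral]

lemma continuous_rectIntegral (hK : Continuous (uncurry K)) (hS : Continuous (uncurry S)) :
    Continuous (uncurry (rectIntegral K S)) := by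
  unfold rectIntegral
  fun_prop

lemma rectIntegral_sub (hK : Continuous (uncurry K)) (hS : Continuous (uncurry S))
    (hS' : Continuous (uncurry S')) (u v : ℝ) :
    rectIntegral K S u v - rectIntegral K S' u v = rectIntegral K (S - S') u v := by
  unfold rectIntegral
  rw [← integral_sub (by apply Continuous.intervalIntegrable; fun_prop)
    (by apply Continuous.intervalIntegrable; fun_prop)]
  refine integral_congr fun y _ => ?_
  rw [← integral_sub (by apply Continuous.intervalIntegrable; fun_prop)
    (by apply Continuous.intervalIntegrable; fun_prop)]
  simp only [Pi.sub_apply, mul_sub]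

lemma abs_integral_abs_pow (v : ℝ) (p : ℕ) :
    |∫ y in (0:ℝ)..v, |y| ^ p| = |v| ^ (p + 1) / (p + 1) := by
  have h := integral_pow_abs_sub_uIoc (a := 0) (b := v) (n := p)
  simp only [sub_zero] at h
  rw [abs_integral_eq_abs_integral_uIoc, h, abs_of_nonneg (by positivity)]

lemma abs_rectIntegral_le {u v M C : ℝ} {p : ℕ} (hC : 0 ≤ C)
    (hKb : ∀ x y, |x| ≤ |u| → |y| ≤ |v| → |K x y| ≤ M)
    (hSb : ∀ x y, |x| ≤ |u| → |y| ≤ |v| → |S x y| ≤ C * |y| ^ p / p !) :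
    |rectIntegral K S u v| ≤ M * C * |u| * |v| ^ (p + 1) / (p + 1)! := by
  have hM : 0 ≤ M := (abs_nonneg _).trans (hKb 0 0 (by simp) (by simp))
  have le_of_mem {a x : ℝ} (hx : x ∈ Ι 0 a) : |x| ≤ |a| := by
    simpa using Set.abs_sub_left_of_mem_uIcc (Set.uIoc_subset_uIcc hx)
  have inner : ∀ y ∈ Ι 0 v, ‖∫ x in (0:ℝ)..u, K x y * S x y‖ ≤ M * C * |u| / p ! * |y| ^ p := by
    intro y hy
    calc ‖∫ x in (0:ℝ)..u, K x y * S x y‖ ≤ M * (C * |y| ^ p / p !) * |u - 0| :=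
          norm_integral_le_of_norm_le_const fun x hx => by
            rw [Real.norm_eq_abs, abs_mul]
            exact mul_le_mul (hKb x y (le_of_mem hx) (le_of_mem hy))
              (hSb x y (le_of_mem hx) (le_of_mem hy)) (abs_nonneg _) hM
      _ = M * C * |u| / p ! * |y| ^ p := by rw [sub_zero]; ring
  calc |rectIntegral K S u v| ≤ |∫ y in (0:ℝ)..v, M * C * |u| / p ! * |y| ^ p| :=
        norm_integral_le_abs_of_norm_le
          (MeasureTheory.ae_restrict_of_forall_mem measurableSet_uIoc inner)
          (by apply Continuous.intervalIntegrable; fun_prop)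
    _ = M * C * |u| / p ! * (|v| ^ (p + 1) / (p + 1)) := by
        rw [integral_const_mul, abs_mul, abs_integral_abs_pow, abs_of_nonneg (by positivity)]
    _ = M * C * |u| * |v| ^ (p + 1) / (p + 1)! := by
        rw [Nat.factorial_succ]; push_cast; field_simp

end rectIntegral

lemma mem_closedBall_zero_iff_abs {p : ℝ × ℝ} {R : ℝ} :
    p ∈ closedBall 0 R ↔ |p.1| ≤ R ∧ |p.2| ≤ R := by
  rw [mem_closedBall_zero_iff, norm_prod_le_iff, Real.norm_eq_abs, Real.norm_eq_abs]

lemma exists_abs_le_on_square {F : ℝ → ℝ → ℝ} (hF : Continuous (uncurry F)) (R : ℝ) :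
    ∃ M, 0 ≤ M ∧ ∀ x y, |x| ≤ R → |y| ≤ R → |F x y| ≤ M := by
  obtain ⟨M, hM⟩ := (isCompact_closedBall (0 : ℝ × ℝ) R).exists_bound_of_continuousOn
    hF.continuousOn
  exact ⟨max M 0, le_max_right _ _, fun x y hx hy =>
    (hM (x, y) (mem_closedBall_zero_iff_abs.2 ⟨hx, hy⟩)).trans (le_max_left _ _)⟩

structure IsPicardSequence (K f : ℝ → ℝ → ℝ) (κ : ℝ) (T : ℕ → ℝ → ℝ → ℝ) : Prop where
  zero : ∀ u v, T 0 u v = f u v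
  succ : ∀ n u v, T (n + 1) u v = f u v + κ * rectIntegral K (T n) u v

noncomputable def picardLimit (T : ℕ → ℝ → ℝ → ℝ) (u v : ℝ) : ℝ :=
  T 0 u v + ∑' k, (T (k + 1) u v - T k u v)

lemma tendsto_rectIntegral_of_tendstoLocallyUniformly {ι : Type*} {l : Filter ι}
    {K : ℝ → ℝ → ℝ} {S : ι → ℝ → ℝ → ℝ} {S₀ : ℝ → ℝ → ℝ} (hK : Continuous (uncurry K))
    (hS : ∀ i, Continuous (uncurry (S i))) (hS₀ : Continuous (uncurry S₀))
    (hlim : TendstoLocallyUniformly (fun i => uncurry (S i)) (uncurry S₀) l) (u v : ℝ) :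
    Tendsto (fun i => rectIntegral K (S i) u v) l (𝓝 (rectIntegral K S₀ u v)) := by
  set R := max |u| |v|
  obtain ⟨M, hM, hKb⟩ := exists_abs_le_on_square hK R
  have hunif := (tendstoLocallyUniformly_iff_forall_isCompact.1 hlim) _
    (isCompact_closedBall (0 : ℝ × ℝ) R)
  rw [Metric.tendsto_nhds]
  intro ε hε
  set δ := ε / (M * |u| * |v| + 1)
  filter_upwards [Metric.tendstoUniformlyOn_iff.1 hunif δ (by positivity)] with i hi
  have hSb : ∀ x y, |x| ≤ |u| → |y| ≤ |v| → |(S i - S₀) x y| ≤ δ * |y| ^ 0 / 0 ! := by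
    intro x y hx hy
    have hxy : (x, y) ∈ closedBall (0 : ℝ × ℝ) R :=
      mem_closedBall_zero_iff_abs.2 ⟨hx.trans (le_max_left _ _), hy.trans (le_max_right _ _)⟩
    simpa [Real.dist_eq, abs_sub_comm] using (hi (x, y) hxy).le
  rw [Real.dist_eq, rectIntegral_sub hK (hS i) hS₀]
  calc |rectIntegral K (S i - S₀) u v| ≤ M * δ * |u| * |v| ^ (0 + 1) / (0 + 1)! :=
        abs_rectIntegral_le (by positivity)
          (fun x y hx hy => hKb x y (hx.trans (le_max_left _ _)) (hy.trans (le_max_right _ _)))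
          hSb
    _ = M * |u| * |v| / (M * |u| * |v| + 1) * ε := by simp only [δ]; field_simp; ring
    _ < ε := mul_lt_of_lt_one_left hε ((div_lt_one (by positivity)).2 (lt_add_one _))

namespace IsPicardSequence

variable {K f : ℝ → ℝ → ℝ} {κ : ℝ} {T : ℕ → ℝ → ℝ → ℝ}

lemma continuous (hT : IsPicardSequence K f κ T) (hK : Continuous (uncurry K))
    (hf : Continuous (uncurry f)) (n : ℕ) : Continuous (uncurry (T n)) := by
  induction n with
  | zero => exact hf.congr fun p => (hT.zero p.1 p.2).symm
  | succ n ih =>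
    exact (hf.add (continuous_const.mul (continuous_rectIntegral hK ih))).congr
      fun p => (hT.succ n p.1 p.2).symm

lemma succ_sub_succ (hT : IsPicardSequence K f κ T) (hK : Continuous (uncurry K))
    (hf : Continuous (uncurry f)) (n : ℕ) (u v : ℝ) :
    T (n + 2) u v - T (n + 1) u v = κ * rectIntegral K (T (n + 1) - T n) u v := by
  rw [hT.succ, hT.succ, ← rectIntegral_sub hK (hT.continuous hK hf _) (hT.continuous hK hf _)]
  ring

lemma abs_succ_sub_le (hT : IsPicardSequence K f κ T) (hK : Continuous (uncurry K))
    (hf : Continuous (uncurry f)) {R M C : ℝ} (hM : 0 ≤ M) (hC : 0 ≤ C)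
    (hKb : ∀ x y, |x| ≤ R → |y| ≤ R → |K x y| ≤ M)
    (hCb : ∀ x y, |x| ≤ R → |y| ≤ R → |T 1 x y - T 0 x y| ≤ C) (n : ℕ) {u v : ℝ}
    (hu : |u| ≤ R) (hv : |v| ≤ R) :
    |T (n + 1) u v - T n u v| ≤ C * (|κ| * M * R) ^ n * |v| ^ n / n ! := by
  induction n generalizing u v with
  | zero => simpa using hCb u v hu hv
  | succ n ih =>
    have hR : 0 ≤ R := (abs_nonneg u).trans hu
    have hstep := abs_rectIntegral_le (K := K) (S := T (n + 1) - T n) (u := u) (v := v)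
      (M := M) (C := C * (|κ| * M * R) ^ n) (by positivity)
      (fun x y hx hy => hKb x y (hx.trans hu) (hy.trans hv))
      (fun x y hx hy => ih (hx.trans hu) (hy.trans hv))
    rw [hT.succ_sub_succ hK hf, abs_mul]
    calc |κ| * |rectIntegral K (T (n + 1) - T n) u v|
        ≤ |κ| * (M * (C * (|κ| * M * R) ^ n) * |u| * |v| ^ (n + 1) / (n + 1)!) := by gcongr
      _ ≤ |κ| * (M * (C * (|κ| * M * R) ^ n) * R * |v| ^ (n + 1) / (n + 1)!) := by gcongr
      _ = C * (|κ| * M * R) ^ (n + 1) * |v| ^ (n + 1) / (n + 1)! := by ring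

lemma tendstoUniformlyOn_closedBall (hT : IsPicardSequence K f κ T)
    (hK : Continuous (uncurry K)) (hf : Continuous (uncurry f)) (R : ℝ) :
    TendstoUniformlyOn (fun n => uncurry (T n)) (uncurry (picardLimit T)) atTop
      (closedBall 0 R) := by
  obtain ⟨M, hM, hKb⟩ := exists_abs_le_on_square hK R
  obtain ⟨C, hC, hCb⟩ := exists_abs_le_on_square (F := fun x y => T 1 x y - T 0 x y)
    ((hT.continuous hK hf 1).sub (hT.continuous hK hf 0)) R
  set a := |κ| * M * R * R
  have hsum : Summable fun n => C * a ^ n / n ! := by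
    simpa [mul_div_assoc] using (Real.summable_pow_div_factorial a).mul_left C
  have hbound : ∀ n, ∀ p ∈ closedBall (0 : ℝ × ℝ) R,
      ‖T (n + 1) p.1 p.2 - T n p.1 p.2‖ ≤ C * a ^ n / n ! := by
    intro n p hp
    obtain ⟨hu, hv⟩ := mem_closedBall_zero_iff_abs.1 hp
    have hR : 0 ≤ R := (abs_nonneg _).trans hu
    calc ‖T (n + 1) p.1 p.2 - T n p.1 p.2‖ ≤ C * (|κ| * M * R) ^ n * |p.2| ^ n / n ! :=
          hT.abs_succ_sub_le hK hf hM hC hKb hCb n hu hv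
      _ ≤ C * (|κ| * M * R) ^ n * R ^ n / n ! := by gcongr
      _ = C * a ^ n / n ! := by rw [mul_assoc C, ← mul_pow]
  have hpartial := tendstoUniformlyOn_tsum_nat hsum hbound
  rw [Metric.tendstoUniformlyOn_iff] at hpartial ⊢
  intro ε hε
  filter_upwards [hpartial ε hε] with n hn p hp
  show dist (picardLimit T p.1 p.2) (T n p.1 p.2) < ε
  rw [← sub_add_cancel (T n p.1 p.2) (T 0 p.1 p.2),
    ← Finset.sum_range_sub (fun k => T k p.1 p.2)]
  simpa [picardLimit, add_comm (T 0 p.1 p.2)] using hn p hp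

lemma tendstoLocallyUniformly (hT : IsPicardSequence K f κ T) (hK : Continuous (uncurry K))
    (hf : Continuous (uncurry f)) :
    TendstoLocallyUniformly (fun n => uncurry (T n)) (uncurry (picardLimit T)) atTop := by
  refine tendstoLocallyUniformly_iff_forall_isCompact.2 fun s hs => ?_
  obtain ⟨R, hR⟩ := hs.isBounded.subset_closedBall 0
  exact (hT.tendstoUniformlyOn_closedBall hK hf R).mono hR

lemma continuous_picardLimit (hT : IsPicardSequence K f κ T) (hK : Continuous (uncurry K))
    (hf : Continuous (uncurry f)) : Continuous (uncurry (picardLimit T)) :=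
  (hT.tendstoLocallyUniformly hK hf).continuous
    (Frequently.of_forall (hT.continuous hK hf))

lemma picardLimit_eq (hT : IsPicardSequence K f κ T) (hK : Continuous (uncurry K))
    (hf : Continuous (uncurry f)) (u v : ℝ) :
    picardLimit T u v = f u v + κ * rectIntegral K (picardLimit T) u v := by
  have hlim := hT.tendstoLocallyUniformly hK hf
  have hsucc : Tendsto (fun n => T (n + 1) u v) atTop (𝓝 (picardLimit T u v)) :=
    ((tendstoLocallyUniformlyOn_univ.2 hlim).tendsto_at (Set.mem_univ (u, v))).comp
      (tendsto_add_atTop_nat 1)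
  refine tendsto_nhds_unique hsucc ?_
  simp only [hT.succ]
  exact tendsto_const_nhds.add ((tendsto_rectIntegral_of_tendstoLocallyUniformly hK
    (hT.continuous hK hf) (hT.continuous_picardLimit hK hf) hlim u v).const_mul κ)

end IsPicardSequence

theorem time_kernel_existence_general (μ ℏ c : ℝ)
    (V g : ℝ → ℝ) (hV : Continuous V) (hg : AnalyticOn ℝ g Set.univ) (hg0 : g 0 = 0)
    (Tn : ℕ → ℝ → ℝ → ℝ)
    (h0 : ∀ u v : ℝ, Tn 0 u v = u / 4 + g v + c)
    (hrec : ∀ n : ℕ, ∀ u v : ℝ, Tn (n + 1) u v = u / 4 + g v + c +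
      μ / (2 * ℏ ^ 2) *
        ∫ y in (0:ℝ)..v, ∫ x in (0:ℝ)..u, (V ((x + y) / 2) - V ((x - y) / 2)) * Tn n x y) :
    ∃ T : ℝ → ℝ → ℝ,
      Continuous (fun p : ℝ × ℝ => T p.1 p.2) ∧
      (∀ a b a' b' : ℝ,
        TendstoUniformlyOn (fun n (p : ℝ × ℝ) => Tn n p.1 p.2) (fun p => T p.1 p.2)
          atTop (Set.Icc a b ×ˢ Set.Icc a' b')) ∧
      (∀ u v : ℝ, T u v = u / 4 + g v + c +
        μ / (2 * ℏ ^ 2) *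
          ∫ y in (0:ℝ)..v, ∫ x in (0:ℝ)..u, (V ((x + y) / 2) - V ((x - y) / 2)) * T x y) ∧
      (∀ u : ℝ, T u 0 = u / 4 + c) ∧ (∀ v : ℝ, T 0 v = g v + c) := by
  set K : ℝ → ℝ → ℝ := fun x y => V ((x + y) / 2) - V ((x - y) / 2)
  have hK : Continuous (uncurry K) := by fun_prop
  have hf : Continuous (uncurry fun u v => u / 4 + g v + c) := by
    have hgc := continuousOn_univ.1 hg.continuousOn
    fun_prop
  have hT : IsPicardSequence K (fun u v => u / 4 + g v + c) (μ / (2 * ℏ ^ 2)) Tn := ⟨h0, hrec⟩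
  have hfix := hT.picardLimit_eq hK hf
  refine ⟨picardLimit Tn, hT.continuous_picardLimit hK hf,
    fun a b a' b' => tendstoLocallyUniformly_iff_forall_isCompact.1
      (hT.tendstoLocallyUniformly hK hf) _ (isCompact_Icc.prod isCompact_Icc), hfix, ?_, ?_⟩
  · intro u
    simp [hfix u 0, hg0]
  · intro v
    simp [hfix 0 v]

theorem time_kernel_existence (μ ℏ c : ℝ) (hμ : 0 < μ) (hℏ : 0 < ℏ)
    (V g : ℝ → ℝ) (hV : Continuous V) (hg : AnalyticOn ℝ g Set.univ) (hg0 : g 0 = 0)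
    (Tn : ℕ → ℝ → ℝ → ℝ)
    (h0 : ∀ u v : ℝ, Tn 0 u v = u / 4 + g v + c)
    (hrec : ∀ n : ℕ, ∀ u v : ℝ, Tn (n + 1) u v = u / 4 + g v + c +
      μ / (2 * ℏ ^ 2) *
        ∫ y in (0:ℝ)..v, ∫ x in (0:ℝ)..u, (V ((x + y) / 2) - V ((x - y) / 2)) * Tn n x y) :
    ∃ T : ℝ → ℝ → ℝ,
      Continuous (fun p : ℝ × ℝ => T p.1 p.2) ∧
      (∀ a b a' b' : ℝ,
        TendstoUniformlyOn (fun n (p : ℝ × ℝ) => Tn n p.1 p.2) (fun p => T p.1 p.2)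
          atTop (Set.Icc a b ×ˢ Set.Icc a' b')) ∧
      (∀ u v : ℝ, T u v = u / 4 + g v + c +
        μ / (2 * ℏ ^ 2) *
          ∫ y in (0:ℝ)..v, ∫ x in (0:ℝ)..u, (V ((x + y) / 2) - V ((x - y) / 2)) * T x y) ∧
      (∀ u : ℝ, T u 0 = u / 4 + c) ∧ (∀ v : ℝ, T 0 v = g v + c) :=
  time_kernel_existence_general μ ℏ c V g hV hg hg0 Tn h0 hrec
end

section
/- For V(q) = μω²q²/2, the function T(q,q') = (1/4)Σ_{j=0}^∞ (1/(2j+1)!) (μω/2ℏ)^{2j} (q+q')^{2j+1}(q−q')^{2j} satisfies the time kernel equation −(ℏ²/2μ)∂²T/∂q² + (ℏ²/2μ)∂²T/∂q'² + [V(q) − V(q')]T = 0, with T(q,q) = q/2 and T(q,−q) = 0; moreover the series equals (ℏ/(2μω))·(1/(q−q'))·sinh((μω/2ℏ)(q+q')(q−q')) for q ≠ q'. -/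
noncomputable def Scoef : ℕ → ℝ := fun n => if Even n then ((Nat.factorial (n + 1) : ℝ))⁻¹ else 0

noncomputable def Sser : FormalMultilinearSeries ℝ ℝ ℝ :=
  FormalMultilinearSeries.ofScalars ℝ Scoef

noncomputable def Sfun : ℝ → ℝ := Sser.sum

lemma Sser_radius : Sser.radius = ⊤ := by
  apply FormalMultilinearSeries.radius_eq_top_of_summable_norm
  intro r
  apply Summable.of_nonneg_of_le (fun n => by positivity) (fun n => ?_)
    (Real.summable_pow_div_factorial r)
  have h1 : ‖Sser n‖ = ‖Scoef n‖ := FormalMultilinearSeries.ofScalars_norm ℝ Scoef n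
  have h2 : ‖Scoef n‖ ≤ ((Nat.factorial n : ℝ))⁻¹ := by
    rw [Scoef]
    split_ifs with h
    · rw [Real.norm_eq_abs, abs_of_nonneg (by positivity)]
      apply inv_anti₀ (by positivity)
      exact_mod_cast Nat.factorial_le (Nat.le_succ n)
    · simp only [norm_zero]
      positivity
  rw [h1]
  calc ‖Scoef n‖ * (r : ℝ) ^ n ≤ ((Nat.factorial n : ℝ))⁻¹ * (r : ℝ) ^ n := by
        apply mul_le_mul_of_nonneg_right h2 (by positivity)
    _ = (r : ℝ) ^ n / (Nat.factorial n : ℝ) := by ring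

lemma Sfun_hasSum (x : ℝ) :
    HasSum (fun j : ℕ => ((Nat.factorial (2 * j + 1) : ℝ))⁻¹ * x ^ (2 * j)) (Sfun x) := by
  have hx : x ∈ EMetric.ball (0 : ℝ) Sser.radius := by
    rw [Sser_radius]; exact EMetric.mem_ball.mpr (edist_lt_top x 0)
  have h0 : HasSum (fun n : ℕ => Scoef n * x ^ n) (Sfun x) := by
    have h := Sser.hasSum hx
    have h2 : (fun n : ℕ => Sser n fun _ => x) = fun n : ℕ => Scoef n * x ^ n := by
      funext n
      simp [Sser, FormalMultilinearSeries.ofScalars, smul_eq_mul]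
    rwa [h2] at h
  have hinj : Function.Injective (fun j : ℕ => 2 * j) := fun a b h => by
    dsimp at h; omega
  have hside : ∀ n ∉ Set.range (fun j : ℕ => 2 * j), Scoef n * x ^ n = 0 := by
    intro n hn
    have hodd : ¬ Even n := by
      simp only [Set.mem_range] at hn
      rintro ⟨k, hk⟩
      exact hn ⟨k, by omega⟩
    simp [Scoef, hodd]
  have h1 := (hinj.hasSum_iff hside).mpr h0
  have h2 : ((fun n : ℕ => Scoef n * x ^ n) ∘ (fun j : ℕ => 2 * j)) =
      fun j : ℕ => ((Nat.factorial (2 * j + 1) : ℝ))⁻¹ * x ^ (2 * j) := by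
    funext j
    simp [Scoef, even_two_mul j, Function.comp]
  rwa [h2] at h1

lemma Sfun_mul (x : ℝ) : x * Sfun x = Real.sinh x := by
  have h := (Sfun_hasSum x).mul_left x
  have h2 : (fun j : ℕ => x * (((Nat.factorial (2 * j + 1) : ℝ))⁻¹ * x ^ (2 * j))) =
      fun j : ℕ => x ^ (2 * j + 1) / (Nat.factorial (2 * j + 1) : ℝ) := by
    funext j; rw [pow_succ]; ring
  rw [h2] at h
  exact h.unique (Real.hasSum_sinh x)

lemma Sfun_zero : Sfun 0 = 1 := by
  have h := Sfun_hasSum 0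
  have h2 : HasSum (fun j : ℕ => ((Nat.factorial (2 * j + 1) : ℝ))⁻¹ * (0:ℝ) ^ (2 * j)) 1 := by
    have h3 := hasSum_single
      (f := fun j : ℕ => ((Nat.factorial (2 * j + 1) : ℝ))⁻¹ * (0:ℝ) ^ (2 * j)) 0
      (fun b hb => by
        have hb2 : 2 * b ≠ 0 := by omega
        simp [zero_pow hb2])
    norm_num at h3
    exact h3
  exact h.unique h2

lemma Sfun_analyticAt (x : ℝ) : AnalyticAt ℝ Sfun x := by
  have hball : HasFPowerSeriesOnBall Sfun Sser 0 ⊤ := by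
    have := Sser.hasFPowerSeriesOnBall (by rw [Sser_radius]; exact ENNReal.zero_lt_top)
    rwa [Sser_radius] at this
  exact hball.analyticOnNhd x (by simp)

lemma Sfun_deriv_analyticAt (x : ℝ) : AnalyticAt ℝ (deriv Sfun) x := by
  have H : AnalyticOnNhd ℝ Sfun Set.univ := fun y _ => Sfun_analyticAt y
  exact H.deriv x trivial

lemma Sfun_hasDerivAt (x : ℝ) : HasDerivAt Sfun (deriv Sfun x) x :=
  (Sfun_analyticAt x).differentiableAt.hasDerivAt

lemma Sfun_deriv_hasDerivAt (x : ℝ) :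
    HasDerivAt (deriv Sfun) (deriv (deriv Sfun) x) x :=
  (Sfun_deriv_analyticAt x).differentiableAt.hasDerivAt

lemma Sfun_id1 (x : ℝ) : Sfun x + x * deriv Sfun x = Real.cosh x := by
  have hd : ∀ y : ℝ, HasDerivAt (fun t : ℝ => t * Sfun t)
      (1 * Sfun y + y * deriv Sfun y) y :=
    fun y => (hasDerivAt_id y).mul (Sfun_hasDerivAt y)
  have heq : (fun t : ℝ => t * Sfun t) = Real.sinh := funext Sfun_mul
  rw [heq] at hd
  have := (hd x).unique (Real.hasDerivAt_sinh x)
  linarith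

lemma Sfun_id2 (x : ℝ) :
    2 * deriv Sfun x + x * deriv (deriv Sfun) x = x * Sfun x := by
  have hd : ∀ y : ℝ, HasDerivAt (fun t : ℝ => Sfun t + t * deriv Sfun t)
      (deriv Sfun y + (1 * deriv Sfun y + y * deriv (deriv Sfun) y)) y :=
    fun y => (Sfun_hasDerivAt y).add ((hasDerivAt_id y).mul (Sfun_deriv_hasDerivAt y))
  have heq : (fun t : ℝ => Sfun t + t * deriv Sfun t) = Real.cosh := funext Sfun_id1
  rw [heq] at hd
  have h := (hd x).unique (Real.hasDerivAt_cosh x)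
  rw [← Sfun_mul x] at h
  linarith

theorem harmonic_oscillator_time_kernel (μ ω ℏ : ℝ) (hμ : 0 < μ) (hω : 0 < ω) (hℏ : 0 < ℏ)
    (V : ℝ → ℝ) (hV : ∀ q : ℝ, V q = μ * ω ^ 2 * q ^ 2 / 2)
    (T : ℝ → ℝ → ℝ)
    (hT : ∀ q q' : ℝ, T q q' = (1 / 4) * ∑' j : ℕ,
      (1 / (Nat.factorial (2 * j + 1) : ℝ)) * (μ * ω / (2 * ℏ)) ^ (2 * j) *
        (q + q') ^ (2 * j + 1) * (q - q') ^ (2 * j)) :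
    (∀ q q' : ℝ,
      -(ℏ ^ 2 / (2 * μ)) * iteratedDeriv 2 (fun x : ℝ => T x q') q
        + ℏ ^ 2 / (2 * μ) * iteratedDeriv 2 (fun y : ℝ => T q y) q'
        + (V q - V q') * T q q' = 0) ∧
    (∀ q : ℝ, T q q = q / 2) ∧ (∀ q : ℝ, T q (-q) = 0) ∧
    (∀ q q' : ℝ, q ≠ q' → T q q' =
      ℏ / (2 * μ * ω) * (1 / (q - q')) *
        Real.sinh (μ * ω / (2 * ℏ) * (q + q') * (q - q'))) := by
  have hTf : ∀ q q' : ℝ, T q q' =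
      (q + q') / 4 * Sfun (μ * ω / (2 * ℏ) * (q + q') * (q - q')) := by
    intro q q'
    rw [hT]
    have h := (Sfun_hasSum (μ * ω / (2 * ℏ) * (q + q') * (q - q'))).mul_left (q + q')
    have h2 : (fun j : ℕ => (q + q') *
        (((Nat.factorial (2 * j + 1) : ℝ))⁻¹ *
          (μ * ω / (2 * ℏ) * (q + q') * (q - q')) ^ (2 * j))) =
        fun j : ℕ => (1 / (Nat.factorial (2 * j + 1) : ℝ)) * (μ * ω / (2 * ℏ)) ^ (2 * j) *
          (q + q') ^ (2 * j + 1) * (q - q') ^ (2 * j) := by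
      funext j
      rw [mul_pow, mul_pow, pow_succ]
      ring
    rw [h2] at h
    rw [h.tsum_eq]
    ring
  refine ⟨?_, ?_, ?_, ?_⟩
  · -- PDE
    intro q q'
    have hμ' := hμ.ne'
    have hℏ' := hℏ.ne'
    have hu1 : ∀ x : ℝ, HasDerivAt (fun t : ℝ => μ * ω / (2 * ℏ) * (t + q') * (t - q'))
        (2 * (μ * ω / (2 * ℏ)) * x) x := by
      intro x
      have h : HasDerivAt (fun t : ℝ => μ * ω / (2 * ℏ) * (t + q') * (t - q'))
          (μ * ω / (2 * ℏ) * 1 * (x - q') + μ * ω / (2 * ℏ) * (x + q') * 1) x :=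
        (((hasDerivAt_id x).add_const q').const_mul (μ * ω / (2 * ℏ))).mul
          ((hasDerivAt_id x).sub_const q')
      exact h.congr_deriv (by ring)
    have hf1 : ∀ x : ℝ, HasDerivAt (fun t : ℝ => T t q')
        (1 / 4 * Sfun (μ * ω / (2 * ℏ) * (x + q') * (x - q'))
          + (x + q') / 4 * (deriv Sfun (μ * ω / (2 * ℏ) * (x + q') * (x - q'))
            * (2 * (μ * ω / (2 * ℏ)) * x))) x := by
      intro x
      have h2 : HasDerivAt (fun t : ℝ => Sfun (μ * ω / (2 * ℏ) * (t + q') * (t - q')))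
          (deriv Sfun (μ * ω / (2 * ℏ) * (x + q') * (x - q'))
            * (2 * (μ * ω / (2 * ℏ)) * x)) x :=
        (Sfun_hasDerivAt _).comp x (hu1 x)
      have h3 : HasDerivAt
          (fun t : ℝ => (t + q') / 4 * Sfun (μ * ω / (2 * ℏ) * (t + q') * (t - q')))
          (1 / 4 * Sfun (μ * ω / (2 * ℏ) * (x + q') * (x - q'))
            + (x + q') / 4 * (deriv Sfun (μ * ω / (2 * ℏ) * (x + q') * (x - q'))
              * (2 * (μ * ω / (2 * ℏ)) * x))) x :=
        (((hasDerivAt_id x).add_const q').div_const 4).mul h2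
      have heq : (fun t : ℝ => T t q') =
          fun t : ℝ => (t + q') / 4 * Sfun (μ * ω / (2 * ℏ) * (t + q') * (t - q')) :=
        funext fun t => hTf t q'
      rw [heq]
      exact h3
    have hderiv1 : deriv (fun t : ℝ => T t q') =
        fun x : ℝ => 1 / 4 * Sfun (μ * ω / (2 * ℏ) * (x + q') * (x - q'))
          + (x + q') / 4 * (deriv Sfun (μ * ω / (2 * ℏ) * (x + q') * (x - q'))
            * (2 * (μ * ω / (2 * ℏ)) * x)) :=
      funext fun x => (hf1 x).deriv
    have hf2 : HasDerivAt (deriv (fun t : ℝ => T t q'))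
        (1 / 4 * (deriv Sfun (μ * ω / (2 * ℏ) * (q + q') * (q - q'))
            * (2 * (μ * ω / (2 * ℏ)) * q))
          + (1 / 4 * (deriv Sfun (μ * ω / (2 * ℏ) * (q + q') * (q - q'))
              * (2 * (μ * ω / (2 * ℏ)) * q))
            + (q + q') / 4 *
              (deriv (deriv Sfun) (μ * ω / (2 * ℏ) * (q + q') * (q - q'))
                  * (2 * (μ * ω / (2 * ℏ)) * q) * (2 * (μ * ω / (2 * ℏ)) * q)
                + deriv Sfun (μ * ω / (2 * ℏ) * (q + q') * (q - q'))
                  * (2 * (μ * ω / (2 * ℏ))))))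
        q := by
      rw [hderiv1]
      have hA : HasDerivAt
          (fun x : ℝ => 1 / 4 * Sfun (μ * ω / (2 * ℏ) * (x + q') * (x - q')))
          (1 / 4 * (deriv Sfun (μ * ω / (2 * ℏ) * (q + q') * (q - q'))
            * (2 * (μ * ω / (2 * ℏ)) * q))) q :=
        ((Sfun_hasDerivAt _).comp q (hu1 q)).const_mul (1 / 4)
      have hB1 : HasDerivAt
          (fun x : ℝ => deriv Sfun (μ * ω / (2 * ℏ) * (x + q') * (x - q'))
            * (2 * (μ * ω / (2 * ℏ)) * x))
          (deriv (deriv Sfun) (μ * ω / (2 * ℏ) * (q + q') * (q - q'))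
              * (2 * (μ * ω / (2 * ℏ)) * q) * (2 * (μ * ω / (2 * ℏ)) * q)
            + deriv Sfun (μ * ω / (2 * ℏ) * (q + q') * (q - q'))
              * (2 * (μ * ω / (2 * ℏ)) * 1)) q :=
        ((Sfun_deriv_hasDerivAt _).comp q (hu1 q)).mul
          ((hasDerivAt_id q).const_mul (2 * (μ * ω / (2 * ℏ))))
      have hB : HasDerivAt
          (fun x : ℝ => (x + q') / 4 *
            (deriv Sfun (μ * ω / (2 * ℏ) * (x + q') * (x - q'))
              * (2 * (μ * ω / (2 * ℏ)) * x)))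
          (1 / 4 * (deriv Sfun (μ * ω / (2 * ℏ) * (q + q') * (q - q'))
              * (2 * (μ * ω / (2 * ℏ)) * q))
            + (q + q') / 4 *
              (deriv (deriv Sfun) (μ * ω / (2 * ℏ) * (q + q') * (q - q'))
                  * (2 * (μ * ω / (2 * ℏ)) * q) * (2 * (μ * ω / (2 * ℏ)) * q)
                + deriv Sfun (μ * ω / (2 * ℏ) * (q + q') * (q - q'))
                  * (2 * (μ * ω / (2 * ℏ)) * 1))) q :=
        (((hasDerivAt_id q).add_const q').div_const 4).mul hB1
      exact (hA.add hB).congr_deriv (by ring)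
    have hu2 : ∀ y : ℝ, HasDerivAt (fun t : ℝ => μ * ω / (2 * ℏ) * (q + t) * (q - t))
        (-(2 * (μ * ω / (2 * ℏ)) * y)) y := by
      intro y
      have h : HasDerivAt (fun t : ℝ => μ * ω / (2 * ℏ) * (q + t) * (q - t))
          (μ * ω / (2 * ℏ) * 1 * (q - y) + μ * ω / (2 * ℏ) * (q + y) * (-1)) y :=
        (((hasDerivAt_id y).const_add q).const_mul (μ * ω / (2 * ℏ))).mul
          ((hasDerivAt_id y).const_sub q)
      exact h.congr_deriv (by ring)
    have hg1 : ∀ y : ℝ, HasDerivAt (fun t : ℝ => T q t)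
        (1 / 4 * Sfun (μ * ω / (2 * ℏ) * (q + y) * (q - y))
          + (q + y) / 4 * (deriv Sfun (μ * ω / (2 * ℏ) * (q + y) * (q - y))
            * (-(2 * (μ * ω / (2 * ℏ)) * y)))) y := by
      intro y
      have h2 : HasDerivAt (fun t : ℝ => Sfun (μ * ω / (2 * ℏ) * (q + t) * (q - t)))
          (deriv Sfun (μ * ω / (2 * ℏ) * (q + y) * (q - y))
            * (-(2 * (μ * ω / (2 * ℏ)) * y))) y :=
        (Sfun_hasDerivAt _).comp y (hu2 y)
      have h3 : HasDerivAt
          (fun t : ℝ => (q + t) / 4 * Sfun (μ * ω / (2 * ℏ) * (q + t) * (q - t)))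
          (1 / 4 * Sfun (μ * ω / (2 * ℏ) * (q + y) * (q - y))
            + (q + y) / 4 * (deriv Sfun (μ * ω / (2 * ℏ) * (q + y) * (q - y))
              * (-(2 * (μ * ω / (2 * ℏ)) * y)))) y :=
        (((hasDerivAt_id y).const_add q).div_const 4).mul h2
      have heq : (fun t : ℝ => T q t) =
          fun t : ℝ => (q + t) / 4 * Sfun (μ * ω / (2 * ℏ) * (q + t) * (q - t)) :=
        funext fun t => hTf q t
      rw [heq]
      exact h3
    have hderiv2 : deriv (fun t : ℝ => T q t) =
        fun y : ℝ => 1 / 4 * Sfun (μ * ω / (2 * ℏ) * (q + y) * (q - y))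
          + (q + y) / 4 * (deriv Sfun (μ * ω / (2 * ℏ) * (q + y) * (q - y))
            * (-(2 * (μ * ω / (2 * ℏ)) * y))) :=
      funext fun y => (hg1 y).deriv
    have hg2 : HasDerivAt (deriv (fun t : ℝ => T q t))
        (1 / 4 * (deriv Sfun (μ * ω / (2 * ℏ) * (q + q') * (q - q'))
            * (-(2 * (μ * ω / (2 * ℏ)) * q')))
          + (1 / 4 * (deriv Sfun (μ * ω / (2 * ℏ) * (q + q') * (q - q'))
              * (-(2 * (μ * ω / (2 * ℏ)) * q')))
            + (q + q') / 4 *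
              (deriv (deriv Sfun) (μ * ω / (2 * ℏ) * (q + q') * (q - q'))
                  * (-(2 * (μ * ω / (2 * ℏ)) * q')) * (-(2 * (μ * ω / (2 * ℏ)) * q'))
                + deriv Sfun (μ * ω / (2 * ℏ) * (q + q') * (q - q'))
                  * (-(2 * (μ * ω / (2 * ℏ)))))))
        q' := by
      rw [hderiv2]
      have hA : HasDerivAt
          (fun y : ℝ => 1 / 4 * Sfun (μ * ω / (2 * ℏ) * (q + y) * (q - y)))
          (1 / 4 * (deriv Sfun (μ * ω / (2 * ℏ) * (q + q') * (q - q'))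
            * (-(2 * (μ * ω / (2 * ℏ)) * q')))) q' :=
        ((Sfun_hasDerivAt _).comp q' (hu2 q')).const_mul (1 / 4)
      have hB1 : HasDerivAt
          (fun y : ℝ => deriv Sfun (μ * ω / (2 * ℏ) * (q + y) * (q - y))
            * (-(2 * (μ * ω / (2 * ℏ)) * y)))
          (deriv (deriv Sfun) (μ * ω / (2 * ℏ) * (q + q') * (q - q'))
              * (-(2 * (μ * ω / (2 * ℏ)) * q')) * (-(2 * (μ * ω / (2 * ℏ)) * q'))
            + deriv Sfun (μ * ω / (2 * ℏ) * (q + q') * (q - q'))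
              * (-(2 * (μ * ω / (2 * ℏ)) * 1))) q' :=
        ((Sfun_deriv_hasDerivAt _).comp q' (hu2 q')).mul
          (((hasDerivAt_id q').const_mul (2 * (μ * ω / (2 * ℏ)))).neg)
      have hB : HasDerivAt
          (fun y : ℝ => (q + y) / 4 *
            (deriv Sfun (μ * ω / (2 * ℏ) * (q + y) * (q - y))
              * (-(2 * (μ * ω / (2 * ℏ)) * y))))
          (1 / 4 * (deriv Sfun (μ * ω / (2 * ℏ) * (q + q') * (q - q'))
              * (-(2 * (μ * ω / (2 * ℏ)) * q')))
            + (q + q') / 4 *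
              (deriv (deriv Sfun) (μ * ω / (2 * ℏ) * (q + q') * (q - q'))
                  * (-(2 * (μ * ω / (2 * ℏ)) * q')) * (-(2 * (μ * ω / (2 * ℏ)) * q'))
                + deriv Sfun (μ * ω / (2 * ℏ) * (q + q') * (q - q'))
                  * (-(2 * (μ * ω / (2 * ℏ)) * 1)))) q' :=
        (((hasDerivAt_id q').const_add q).div_const 4).mul hB1
      exact (hA.add hB).congr_deriv (by ring)
    have hit1 : iteratedDeriv 2 (fun x : ℝ => T x q') q =
        deriv (deriv (fun x : ℝ => T x q')) q := by
      simp [iteratedDeriv_succ, iteratedDeriv_one]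
    have hit2 : iteratedDeriv 2 (fun y : ℝ => T q y) q' =
        deriv (deriv (fun y : ℝ => T q y)) q' := by
      simp [iteratedDeriv_succ, iteratedDeriv_one]
    rw [hit1, hit2, hf2.deriv, hg2.deriv, hV q, hV q', hTf q q']
    set u0 := μ * ω / (2 * ℏ) * (q + q') * (q - q') with hu0
    have hODE : 2 * deriv Sfun u0 + u0 * deriv (deriv Sfun) u0 - u0 * Sfun u0 = 0 := by
      have := Sfun_id2 u0
      linarith
    set s := Sfun u0 with hs
    set s1 := deriv Sfun u0 with hs1
    set s2 := deriv (deriv Sfun) u0 with hs2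
    have key : -(ℏ ^ 2 / (2 * μ)) *
        (1 / 4 * (s1 * (2 * (μ * ω / (2 * ℏ)) * q))
          + (1 / 4 * (s1 * (2 * (μ * ω / (2 * ℏ)) * q))
            + (q + q') / 4 * (s2 * (2 * (μ * ω / (2 * ℏ)) * q) * (2 * (μ * ω / (2 * ℏ)) * q)
              + s1 * (2 * (μ * ω / (2 * ℏ))))))
        + ℏ ^ 2 / (2 * μ) *
        (1 / 4 * (s1 * (-(2 * (μ * ω / (2 * ℏ)) * q')))
          + (1 / 4 * (s1 * (-(2 * (μ * ω / (2 * ℏ)) * q')))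
            + (q + q') / 4 *
              (s2 * (-(2 * (μ * ω / (2 * ℏ)) * q')) * (-(2 * (μ * ω / (2 * ℏ)) * q'))
              + s1 * (-(2 * (μ * ω / (2 * ℏ)))))))
        + (μ * ω ^ 2 * q ^ 2 / 2 - μ * ω ^ 2 * q' ^ 2 / 2) * ((q + q') / 4 * s) =
        (-(ℏ ^ 2 / (2 * μ)) * (μ * ω / (2 * ℏ)) * (q + q')) *
          (2 * s1 + u0 * s2 - u0 * s) := by
      rw [hu0]
      field_simp
      ring
    rw [key, hODE, mul_zero]
  · intro q
    rw [hTf q q]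
    have harg : μ * ω / (2 * ℏ) * (q + q) * (q - q) = 0 := by ring
    rw [harg, Sfun_zero]
    ring
  · intro q
    rw [hTf q (-q)]
    ring
  · intro q q' hne
    rw [hTf q q', ← Sfun_mul (μ * ω / (2 * ℏ) * (q + q') * (q - q'))]
    have hq : q - q' ≠ 0 := sub_ne_zero.mpr hne
    field_simp
    ring
end

section
/- Define α_j = −iβ (μω/2ℏ)^{2j} / (2j+1)! for j ≥ 0, with β real. Then the series T_C(u,v) = Σ_{j≥0} α_j u^{2j} v^{2j+1} satisfies the harmonic oscillator canonical time kernel equation −(2ℏ²/μ)∂²T_C/∂u∂v + (μω²/2)uv·T_C = 0, with boundary values T_C(u,0) = 0 and T_C(0,v) = −iβ v. -/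
/-!
With `a = μω/(2ℏ)` the series is `T u v = -iβ · S(a u, v)`, where `S(z, v) = sinh(z v) / z` is the
entire function given by the odd part of the exponential series. Hence `∂ᵥT = -iβ cosh(a u v)` and
`∂ᵤ∂ᵥT = -iβ a v sinh(a u v) = a² u v · T`, and `(2ℏ²/μ) a² = μω²/2` is exactly the oscillator
coupling, so the kernel equation holds; the boundary values are read off the series.
-/

open Complex Nat

/-- `sinh (z * v) / z`, extended continuously to `z = 0`. -/
noncomputable def sinhSeries (z v : ℂ) : ℂ :=
  ∑' j : ℕ, z ^ (2 * j) * v ^ (2 * j + 1) / ((2 * j + 1)! : ℂ)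

theorem mul_sinhSeries (z v : ℂ) : z * sinhSeries z v = sinh (z * v) := by
  rw [sinhSeries, sinh_eq_tsum, ← tsum_mul_left]
  congr 1 with j
  ring

@[simp]
theorem sinhSeries_zero_left (v : ℂ) : sinhSeries 0 v = v := by
  rw [sinhSeries, tsum_eq_single 0]
  · simp
  · intro j hj
    simp [hj]

@[simp]
theorem sinhSeries_zero_right (z : ℂ) : sinhSeries z 0 = 0 := by
  simp [sinhSeries]

theorem hasDerivAt_sinhSeries (z v : ℂ) : HasDerivAt (sinhSeries z) (cosh (z * v)) v := by
  rcases eq_or_ne z 0 with rfl | hz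
  · have hid : sinhSeries 0 = id := funext sinhSeries_zero_left
    simpa [hid] using hasDerivAt_id v
  · have hquot : sinhSeries z = fun w => sinh (z * w) / z := by
      funext w
      rw [eq_div_iff hz, mul_comm, mul_sinhSeries]
    have h := (((hasDerivAt_id' v).const_mul z).csinh).div_const z
    rw [mul_one, mul_div_cancel_right₀ _ hz] at h
    rwa [hquot]

theorem reciprocal_hamiltonian_kernel_general (μ ω ℏ β : ℝ) (hμ : 0 < μ)
    (hℏ : 0 < ℏ)
    (T : ℝ → ℝ → ℂ)
    (hT : ∀ u v : ℝ, T u v = ∑' j : ℕ,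
      (-Complex.I * β * ((μ * ω / (2 * ℏ)) ^ (2 * j) : ℝ) / ((Nat.factorial (2 * j + 1) : ℝ) : ℂ)) *
        (u : ℂ) ^ (2 * j) * (v : ℂ) ^ (2 * j + 1)) :
    (∀ u v : ℝ,
      -(2 * (ℏ : ℂ) ^ 2 / μ) * deriv (fun u' : ℝ => deriv (fun v' : ℝ => T u' v') v) u
        + (μ * (ω : ℂ) ^ 2 / 2) * u * v * T u v = 0) ∧
    (∀ u : ℝ, T u 0 = 0) ∧
    (∀ v : ℝ, T 0 v = -Complex.I * β * v) := by
  set a : ℂ := μ * ω / (2 * ℏ)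
  have hT' : ∀ u v : ℝ, T u v = -I * β * sinhSeries (a * u) v := by
    intro u v
    rw [hT, sinhSeries, ← tsum_mul_left]
    congr 1 with j
    push_cast [a]
    ring
  have hderiv_v (u : ℝ) : deriv (fun v' : ℝ => T u v') = fun v : ℝ => -I * β * cosh (a * u * v) := by
    funext v
    simp_rw [hT']
    exact (((hasDerivAt_sinhSeries (a * u) v).comp_ofReal).const_mul _).deriv
  have hderiv_u (u v : ℝ) : HasDerivAt (fun u : ℝ => -I * β * cosh (a * u * v))
      (-I * β * (sinh (a * u * v) * (a * v))) u := by
    simpa using ((((hasDerivAt_id' (u : ℂ)).const_mul a).mul_const (v : ℂ)).ccosh.comp_ofReal).const_mul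
      (-I * β)
  refine ⟨fun u v => ?_, fun u => by simp [hT'], fun v => by simp [hT']⟩
  have hcoupling : a ^ 2 * (2 * ℏ ^ 2 / μ) = μ * ω ^ 2 / 2 := by
    have : (μ : ℂ) ≠ 0 := mod_cast hμ.ne'
    have : (ℏ : ℂ) ≠ 0 := mod_cast hℏ.ne'
    simp only [a]
    field_simp
  simp_rw [hderiv_v, (hderiv_u u v).deriv, hT', ← mul_sinhSeries]
  linear_combination (I * β * u * v * sinhSeries (a * u) v) * hcoupling

theorem reciprocal_hamiltonian_kernel (μ ω ℏ β : ℝ) (hμ : 0 < μ) (hω : 0 < ω)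
    (hℏ : 0 < ℏ) (hβ : 0 < β)
    (T : ℝ → ℝ → ℂ)
    (hT : ∀ u v : ℝ, T u v = ∑' j : ℕ,
      (-Complex.I * β * ((μ * ω / (2 * ℏ)) ^ (2 * j) : ℝ) / ((Nat.factorial (2 * j + 1) : ℝ) : ℂ)) *
        (u : ℂ) ^ (2 * j) * (v : ℂ) ^ (2 * j + 1)) :
    (∀ u v : ℝ,
      -(2 * (ℏ : ℂ) ^ 2 / μ) * deriv (fun u' : ℝ => deriv (fun v' : ℝ => T u' v') v) u
        + (μ * (ω : ℂ) ^ 2 / 2) * u * v * T u v = 0) ∧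
    (∀ u : ℝ, T u 0 = 0) ∧
    (∀ v : ℝ, T 0 v = -Complex.I * β * v) :=
  reciprocal_hamiltonian_kernel_general μ ω ℏ β hμ hℏ T hT
end
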